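/- Let A be a residuated lattice. The following are equivalent: (1) for any two ω-filters G, H of A, if the supremum of G and H in the lattice of ω-filters equals A (i.e. ω(K) = A where K is the lattice ideal generated by I_G ∪ I_H for ideals I_G, I_H with G = ω(I_G), H = ω(I_H)), then G ∨ H = A in the lattice of filters; (2) A is normal; (3) for any family 𝔉 of ω-filters of A, the join ⋁𝔉 in the lattice of filters is an ω-filter; (4) the set of ω-filters is a sublattice of the lattice of filters of A (closed under binary filter join); (5) the set of coannulets {x^⊥ | x ∈ A} is a sublattice of the lattice of filters of A (closed under binary filter join). -/

import Mathlib

class ResiduatedLattice (α : Type*) extends Lattice α, CommMonoid α, BoundedOrder α where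
  rimp : α → α → α
  one_eq_top : (1 : α) = ⊤
  adjunction : ∀ x y z : α, x * y ≤ z ↔ x ≤ rimp y z

variable {α : Type*} [ResiduatedLattice α]

/-- A filter of a residuated lattice: nonempty, closed under `⊙` and upward closed. -/
def IsFilter (F : Set α) : Prop :=
  F.Nonempty ∧ (∀ x ∈ F, ∀ y ∈ F, x * y ∈ F) ∧ ∀ x ∈ F, ∀ y : α, x ≤ y → y ∈ F

/-- A prime filter: a proper filter such that `x ⊔ y ∈ P` implies `x ∈ P` or `y ∈ P`. -/
def IsPrimeFilter (P : Set α) : Prop :=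
  IsFilter P ∧ P ≠ Set.univ ∧ ∀ x y : α, x ⊔ y ∈ P → x ∈ P ∨ y ∈ P

/-- A `∨`-closed subset: nonempty and closed under join. -/
def IsJoinClosed (C : Set α) : Prop :=
  C.Nonempty ∧ ∀ x ∈ C, ∀ y ∈ C, x ⊔ y ∈ C

/-- The filter generated by a set. -/
def filterGen (X : Set α) : Set α := ⋂₀ {G : Set α | IsFilter G ∧ X ⊆ G}

/-- An `X`-minimal prime filter: prime, contains `X`, minimal among primes containing `X`. -/
def IsMinPrimeOver (X P : Set α) : Prop :=
  IsPrimeFilter P ∧ X ⊆ P ∧ ∀ Q : Set α, IsPrimeFilter Q → X ⊆ Q → Q ⊆ P → Q = P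

/-- `ω_F(X) = {a | x ∨ a ∈ F for some x ∈ X}`. -/
def omegaF (F X : Set α) : Set α := {a : α | ∃ x ∈ X, x ⊔ a ∈ F}

/-- The coannihilator `(F : x) = {a | x ∨ a ∈ F}`. -/
def coann (F : Set α) (x : α) : Set α := {a : α | x ⊔ a ∈ F}

/-- `D_F(H) = {a | x ∨ a ∈ F for some x ∉ H}`, the set of `F`-divisors of `H`. -/
def divisorsF (F H : Set α) : Set α := {a : α | ∃ x ∉ H, x ⊔ a ∈ F}

/-- A lattice ideal: nonempty, closed under join and downward closed. -/
def IsLatticeIdeal (I : Set α) : Prop :=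
  I.Nonempty ∧ (∀ x ∈ I, ∀ y ∈ I, x ⊔ y ∈ I) ∧ ∀ x y : α, x ≤ y → y ∈ I → x ∈ I

/-- The lattice ideal generated by a set. -/
def idealGen (X : Set α) : Set α := ⋂₀ {I : Set α | IsLatticeIdeal I ∧ X ⊆ I}

/-- An `ω_F`-filter: a filter of the form `ω_F(I)` for some lattice ideal `I`. -/
def IsOmegaFilter (F H : Set α) : Prop :=
  IsFilter H ∧ ∃ I : Set α, IsLatticeIdeal I ∧ H = omegaF F I

/-- A minimal prime filter: a prime filter minimal among all prime filters. -/
def IsMinPrime (P : Set α) : Prop :=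
  IsPrimeFilter P ∧ ∀ Q : Set α, IsPrimeFilter Q → Q ⊆ P → Q = P

/-- The coannulet `x^⊥ = {a | x ∨ a = 1}`. -/
def coannulet (x : α) : Set α := {a : α | x ⊔ a = ⊤}

/-- `ω(X) = {a | x ∨ a = 1 for some x ∈ X}`. -/
def omegaU (X : Set α) : Set α := {a : α | ∃ x ∈ X, x ⊔ a = ⊤}

/-- An `ω`-filter: a filter of the form `ω(I)` for some lattice ideal `I`. -/
def IsOmegaF (H : Set α) : Prop :=
  IsFilter H ∧ ∃ I : Set α, IsLatticeIdeal I ∧ H = omegaU I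

/-- `A` is normal: every prime filter contains exactly one minimal prime filter. -/
def IsNormalRL (α : Type*) [ResiduatedLattice α] : Prop :=
  ∀ P : Set α, IsPrimeFilter P → ∃! m : Set α, IsMinPrime m ∧ m ⊆ P

/-!
Every condition is equivalent to the elementwise splitting property: `x ⊔ y = 1` implies
`x ⊔ a = 1`, `y ⊔ b = 1` and `a ⊙ b = 0` for some `a, b`, i.e. `x^⊥` and `y^⊥` generate `A`.

An element `x` of a minimal prime filter `m` has `x ⊔ y = 1` for some `y ∉ m`. So if two minimal
primes lay below one prime `P`, splitting such a pair would put `a ⊙ b = 0` into `P`. Conversely,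
if `x^⊥ ∨ y^⊥` is proper it lies in a prime `P`, and the unique minimal prime below `P` contains
`x` or `y`, say `x`; then `x` lies in every prime below `P`, which forces some `d ∉ P` with
`x ⊔ d = 1`, although `d ∈ x^⊥ ⊆ P`.

Under the splitting property `{k | k^⊥ ⊆ F}` is a lattice ideal for every filter `F`, and it
exhibits any join of `ω`-filters as an `ω`-filter. In the other direction, an `ω`-filter that
contains `x` together with `x^⊥` is all of `A`.
-/

namespace ResiduatedLattice

theorem gc_mul_rimp (y : α) : GaloisConnection (· * y) (rimp y) :=
  fun x z => adjunction x y z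

instance : IsOrderedMonoid α where
  mul_le_mul_left _ _ h c := (gc_mul_rimp c).monotone_l h

theorem le_one (a : α) : a ≤ 1 := one_eq_top (α := α) ▸ le_top

theorem mul_le_left (a b : α) : a * b ≤ a := mul_le_of_le_one_right' (le_one b)

theorem sup_mul (a b c : α) : (a ⊔ b) * c = a * c ⊔ b * c := (gc_mul_rimp c).l_sup

theorem sup_mul_sup_le (x a b : α) : (x ⊔ a) * (x ⊔ b) ≤ x ⊔ a * b := by
  rw [sup_mul]
  refine sup_le ((mul_le_left x _).trans le_sup_left) ?_
  rw [mul_comm, sup_mul]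
  exact sup_le ((mul_le_left x a).trans le_sup_left) ((mul_comm b a).trans_le le_sup_right)

end ResiduatedLattice

open ResiduatedLattice

namespace IsFilter

variable {F : Set α}

theorem top_mem (hF : IsFilter F) : ⊤ ∈ F :=
  let ⟨x, hx⟩ := hF.1
  hF.2.2 x hx ⊤ le_top

theorem mul_mem (hF : IsFilter F) {a b : α} (ha : a ∈ F) (hb : b ∈ F) : a * b ∈ F :=
  hF.2.1 a ha b hb

theorem mem_of_le (hF : IsFilter F) {a b : α} (ha : a ∈ F) (hab : a ≤ b) : b ∈ F :=
  hF.2.2 a ha b hab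

theorem pow_mem (hF : IsFilter F) {a : α} (ha : a ∈ F) : ∀ n : ℕ, a ^ n ∈ F
  | 0 => by rw [pow_zero, one_eq_top]; exact hF.top_mem
  | n + 1 => by rw [pow_succ]; exact hF.mul_mem (hF.pow_mem ha n) ha

theorem eq_univ_of_bot_mem (hF : IsFilter F) (h : ⊥ ∈ F) : F = Set.univ :=
  Set.eq_univ_of_forall fun _ => hF.mem_of_le h bot_le

end IsFilter

theorem isFilter_coann {F : Set α} (hF : IsFilter F) (x : α) : IsFilter (coann F x) :=
  ⟨⟨⊤, by simpa [coann] using hF.top_mem⟩,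
    fun a ha b hb => hF.mem_of_le (hF.mul_mem ha hb) (sup_mul_sup_le x a b),
    fun a ha b hab => hF.mem_of_le ha (sup_le_sup_left hab x)⟩

theorem isFilter_singleton_top : IsFilter ({⊤} : Set α) :=
  ⟨⟨⊤, rfl⟩, fun _ ha _ hb => by simp_all [← one_eq_top],
    fun a ha b hab => top_unique (ha ▸ hab)⟩

theorem isFilter_filterGen (X : Set α) : IsFilter (filterGen X) :=
  ⟨⟨⊤, fun _ hG => hG.1.top_mem⟩, fun _ ha _ hb G hG => hG.1.mul_mem (ha G hG) (hb G hG),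
    fun _ ha _ hab G hG => hG.1.mem_of_le (ha G hG) hab⟩

theorem subset_filterGen (X : Set α) : X ⊆ filterGen X :=
  fun _ ha _ hG => hG.2 ha

theorem filterGen_subset {X F : Set α} (hF : IsFilter F) (hXF : X ⊆ F) : filterGen X ⊆ F :=
  fun _ ha => ha F ⟨hF, hXF⟩

theorem mem_filterGen_union {G H : Set α} (hG : IsFilter G) (hH : IsFilter H) {c : α} :
    c ∈ filterGen (G ∪ H) ↔ ∃ a ∈ G, ∃ b ∈ H, a * b ≤ c := by
  refine ⟨fun hc => filterGen_subset (F := {c | ∃ a ∈ G, ∃ b ∈ H, a * b ≤ c}) ?_ ?_ hc, ?_⟩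
  · refine ⟨⟨⊤, ⊤, hG.top_mem, ⊤, hH.top_mem, le_top⟩, ?_, ?_⟩
    · rintro _ ⟨a, ha, b, hb, hab⟩ _ ⟨a', ha', b', hb', hab'⟩
      refine ⟨a * a', hG.mul_mem ha ha', b * b', hH.mul_mem hb hb', ?_⟩
      calc a * a' * (b * b') = a * b * (a' * b') := by ac_rfl
        _ ≤ _ := mul_le_mul' hab hab'
    · rintro _ ⟨a, ha, b, hb, hab⟩ _ hc
      exact ⟨a, ha, b, hb, hab.trans hc⟩
  · rintro a (ha | ha)
    · exact ⟨a, ha, ⊤, hH.top_mem, by rw [← one_eq_top, mul_one]⟩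
    · exact ⟨⊤, hG.top_mem, a, ha, by rw [← one_eq_top, one_mul]⟩
  · rintro ⟨a, ha, b, hb, hab⟩
    have hgen := isFilter_filterGen (G ∪ H)
    exact hgen.mem_of_le (hgen.mul_mem (subset_filterGen _ (.inl ha))
      (subset_filterGen _ (.inr hb))) hab

theorem coannulet_mono {x y : α} (hxy : x ≤ y) : coannulet x ⊆ coannulet y :=
  fun a ha => top_unique (ha ▸ sup_le_sup_right hxy a)

theorem isFilter_coannulet (x : α) : IsFilter (coannulet x) :=
  isFilter_coann isFilter_singleton_top x

theorem isLatticeIdeal_Iic (x : α) : IsLatticeIdeal (Set.Iic x) :=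
  ⟨⟨x, le_rfl⟩, fun _ ha _ hb => sup_le ha hb, fun _ _ hab hb => hab.trans hb⟩

theorem coannulet_eq_omegaU_Iic (x : α) : coannulet x = omegaU (Set.Iic x) := by
  ext a
  exact ⟨fun h => ⟨x, le_rfl, h⟩, fun ⟨_, hb, hba⟩ => coannulet_mono hb hba⟩

theorem isFilter_omegaU {K : Set α} (hK : IsJoinClosed K) : IsFilter (omegaU K) := by
  obtain ⟨⟨k, hk⟩, hsup⟩ := hK
  refine ⟨⟨⊤, k, hk, sup_top_eq k⟩, ?_, ?_⟩
  · rintro a ⟨u, hu, hua⟩ b ⟨v, hv, hvb⟩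
    have hcoann := isFilter_coannulet (u ⊔ v)
    refine ⟨u ⊔ v, hsup u hu v hv, hcoann.mul_mem ?_ ?_⟩
    exacts [coannulet_mono le_sup_left hua, coannulet_mono le_sup_right hvb]
  · rintro a ⟨u, hu, hua⟩ b hab
    exact ⟨u, hu, top_unique (hua ▸ sup_le_sup_left hab u)⟩

theorem IsLatticeIdeal.isJoinClosed {I : Set α} (hI : IsLatticeIdeal I) : IsJoinClosed I :=
  ⟨hI.1, hI.2.1⟩

theorem isOmegaF_omegaU {I : Set α} (hI : IsLatticeIdeal I) : IsOmegaF (omegaU I) :=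
  ⟨isFilter_omegaU hI.isJoinClosed, I, hI, rfl⟩

theorem isOmegaF_coannulet (x : α) : IsOmegaF (coannulet x) :=
  coannulet_eq_omegaU_Iic x ▸ isOmegaF_omegaU (isLatticeIdeal_Iic x)

theorem omegaU_eq_univ_iff {K : Set α} : omegaU K = Set.univ ↔ ⊤ ∈ K := by
  refine ⟨fun h => ?_, fun h => Set.eq_univ_of_forall fun a => ⟨⊤, h, top_sup_eq a⟩⟩
  obtain ⟨k, hk, hkbot⟩ := h.symm ▸ Set.mem_univ (⊥ : α)
  rw [sup_bot_eq] at hkbot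
  exact hkbot ▸ hk

theorem IsOmegaF.eq_univ_of_coannulet_subset {H : Set α} (hH : IsOmegaF H) {x : α} (hx : x ∈ H)
    (hxH : coannulet x ⊆ H) : H = Set.univ := by
  obtain ⟨-, K, hK, rfl⟩ := hH
  obtain ⟨k, hk, hkx⟩ := hx
  obtain ⟨k', hk', hk'k⟩ := hxH (sup_comm k x ▸ hkx)
  exact omegaU_eq_univ_iff.2 (hk'k ▸ hK.2.1 k' hk' k hk)

theorem sup_mem_idealGen {X : Set α} {x y : α} (hx : x ∈ X) (hy : y ∈ X) : x ⊔ y ∈ idealGen X :=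
  fun _ hI => hI.1.2.1 _ (hI.2 hx) _ (hI.2 hy)

theorem idealGen_subset {X K : Set α} (hK : IsLatticeIdeal K) (hXK : X ⊆ K) : idealGen X ⊆ K :=
  fun _ ha => ha K ⟨hK, hXK⟩

theorem mem_idealGen_union {I J : Set α} (hI : IsLatticeIdeal I) (hJ : IsLatticeIdeal J) {c : α}
    (hc : c ∈ idealGen (I ∪ J)) : ∃ i ∈ I, ∃ j ∈ J, c ≤ i ⊔ j := by
  obtain ⟨⟨i₀, hi₀⟩, hIsup, -⟩ := hI
  obtain ⟨⟨j₀, hj₀⟩, hJsup, -⟩ := hJ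
  refine idealGen_subset (K := {c | ∃ i ∈ I, ∃ j ∈ J, c ≤ i ⊔ j}) ?_ ?_ hc
  · refine ⟨⟨⊥, i₀, hi₀, j₀, hj₀, bot_le⟩, ?_, fun a b hab ⟨i, hi, j, hj, hb⟩ =>
      ⟨i, hi, j, hj, hab.trans hb⟩⟩
    rintro a ⟨i, hi, j, hj, ha⟩ b ⟨i', hi', j', hj', hb⟩
    refine ⟨i ⊔ i', hIsup i hi i' hi', j ⊔ j', hJsup j hj j' hj', ?_⟩
    exact (sup_le_sup ha hb).trans_eq (sup_sup_sup_comm i j i' j')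
  · rintro a (ha | ha)
    exacts [⟨a, ha, j₀, hj₀, le_sup_left⟩, ⟨i₀, hi₀, a, ha, le_sup_right⟩]

/-- The filter generated by `F ∪ {a}` when `F` is a filter. -/
def filterAdjoin (F : Set α) (a : α) : Set α := {c | ∃ m ∈ F, ∃ n : ℕ, m * a ^ n ≤ c}

section filterAdjoin

variable {F : Set α}

theorem isFilter_filterAdjoin (hF : IsFilter F) (a : α) : IsFilter (filterAdjoin F a) := by
  refine ⟨⟨⊤, ⊤, hF.top_mem, 0, le_top⟩, ?_, ?_⟩
  · rintro c ⟨m, hm, n, hc⟩ c' ⟨m', hm', n', hc'⟩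
    refine ⟨m * m', hF.mul_mem hm hm', n + n', ?_⟩
    calc m * m' * a ^ (n + n') = m * a ^ n * (m' * a ^ n') := by rw [pow_add]; ac_rfl
      _ ≤ c * c' := mul_le_mul' hc hc'
  · rintro c ⟨m, hm, n, hc⟩ c' hcc'
    exact ⟨m, hm, n, hc.trans hcc'⟩

theorem subset_filterAdjoin (F : Set α) (a : α) : F ⊆ filterAdjoin F a :=
  fun m hm => ⟨m, hm, 0, by rw [pow_zero, mul_one]⟩

theorem IsFilter.mem_filterAdjoin (hF : IsFilter F) (a : α) : a ∈ filterAdjoin F a :=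
  ⟨⊤, hF.top_mem, 1, by rw [pow_one, ← one_eq_top, one_mul]⟩

theorem IsFilter.sup_mem_of_mem_filterAdjoin (hF : IsFilter F) {a b c d : α} (hab : a ⊔ b ∈ F)
    (hc : c ∈ filterAdjoin F a) (hd : d ∈ filterAdjoin F b) : c ⊔ d ∈ F := by
  obtain ⟨m, hm, n, hmc⟩ := hc
  obtain ⟨m', hm', n', hmd⟩ := hd
  -- `coann F x` is a filter, so the powers of `b`, then those of `a`, are absorbed one at a time.
  have hb : m' * b ^ n' ∈ coann F a :=
    (isFilter_coann hF a).mul_mem (hF.mem_of_le hm' le_sup_right)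
      ((isFilter_coann hF a).pow_mem hab n')
  have ha : m * a ^ n ∈ coann F (m' * b ^ n') :=
    (isFilter_coann hF _).mul_mem (hF.mem_of_le hm le_sup_right)
      ((isFilter_coann hF _).pow_mem (show _ ⊔ a ∈ F from sup_comm a _ ▸ hb) n)
  exact hF.mem_of_le (show _ ⊔ _ ∈ F from sup_comm (m' * b ^ n') _ ▸ ha) (sup_le_sup hmc hmd)

end filterAdjoin

theorem isFilter_sUnion_of_isChain {c : Set (Set α)} (hc : ∀ F ∈ c, IsFilter F)
    (hchain : IsChain (· ⊆ ·) c) (hne : c.Nonempty) : IsFilter (⋃₀ c) := by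
  obtain ⟨F₀, hF₀⟩ := hne
  refine ⟨⟨⊤, F₀, hF₀, (hc F₀ hF₀).top_mem⟩, ?_, ?_⟩
  · rintro a ⟨F, hF, haF⟩ b ⟨G, hG, hbG⟩
    rcases hchain.total hF hG with hFG | hGF
    · exact ⟨G, hG, (hc G hG).mul_mem (hFG haF) hbG⟩
    · exact ⟨F, hF, (hc F hF).mul_mem haF (hGF hbG)⟩
  · rintro a ⟨F, hF, haF⟩ b hab
    exact ⟨F, hF, (hc F hF).mem_of_le haF hab⟩

theorem exists_isPrimeFilter_of_disjoint {F D : Set α} (hF : IsFilter F) (hD : IsJoinClosed D)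
    (hFD : Disjoint F D) : ∃ P, IsPrimeFilter P ∧ F ⊆ P ∧ Disjoint P D := by
  obtain ⟨M, hFM, hM⟩ := zorn_subset_nonempty {G | IsFilter G ∧ Disjoint G D}
    (fun c hc hchain hne => ⟨⋃₀ c,
      ⟨isFilter_sUnion_of_isChain (fun G hG => (hc hG).1) hchain hne,
        Set.disjoint_sUnion_left.2 fun G hG => (hc hG).2⟩,
      fun _ => Set.subset_sUnion_of_mem⟩) F ⟨hF, hFD⟩
  obtain ⟨hMF, hMD⟩ := hM.prop
  have meets : ∀ a ∉ M, ∃ d ∈ D, d ∈ filterAdjoin M a := by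
    intro a ha
    by_contra! h
    exact ha (hM.eq_of_subset ⟨isFilter_filterAdjoin hMF a, Set.disjoint_right.2 h⟩
      (subset_filterAdjoin M a) ▸ hMF.mem_filterAdjoin a)
  refine ⟨M, ⟨hMF, fun hMuniv => ?_, fun a b hab => ?_⟩, hFM, hMD⟩
  · obtain ⟨d, hd⟩ := hD.1
    exact Set.disjoint_left.1 hMD (hMuniv ▸ Set.mem_univ d) hd
  · by_contra! hnot
    obtain ⟨d, hdD, hd⟩ := meets a hnot.1
    obtain ⟨d', hd'D, hd'⟩ := meets b hnot.2
    exact Set.disjoint_left.1 hMD (hMF.sup_mem_of_mem_filterAdjoin hab hd hd') (hD.2 d hdD d' hd'D)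

theorem exists_isPrimeFilter_superset {F : Set α} (hF : IsFilter F) (hFne : F ≠ Set.univ) :
    ∃ P, IsPrimeFilter P ∧ F ⊆ P := by
  obtain ⟨P, hP, hFP, -⟩ := exists_isPrimeFilter_of_disjoint hF
    (D := {⊥}) ⟨⟨⊥, rfl⟩, by simp⟩
    (Set.disjoint_singleton_right.2 fun h => hFne (hF.eq_univ_of_bot_mem h))
  exact ⟨P, hP, hFP⟩

theorem isPrimeFilter_sInter_of_isChain {c : Set (Set α)} (hc : ∀ P ∈ c, IsPrimeFilter P)
    (hchain : IsChain (· ⊆ ·) c) (hne : c.Nonempty) : IsPrimeFilter (⋂₀ c) := by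
  obtain ⟨P₀, hP₀⟩ := hne
  refine ⟨⟨⟨⊤, fun P hP => (hc P hP).1.top_mem⟩, fun a ha b hb P hP => (hc P hP).1.mul_mem
    (ha P hP) (hb P hP), fun a ha b hab P hP => (hc P hP).1.mem_of_le (ha P hP) hab⟩,
    fun h => (hc P₀ hP₀).2.1 (Set.eq_univ_of_univ_subset (h ▸ Set.sInter_subset_of_mem hP₀)),
    fun a b hab => ?_⟩
  by_contra! hnot
  obtain ⟨⟨P, hP, haP⟩, ⟨Q, hQ, hbQ⟩⟩ : (∃ P ∈ c, a ∉ P) ∧ ∃ Q ∈ c, b ∉ Q := by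
    simpa [Set.mem_sInter] using hnot
  rcases hchain.total hP hQ with hPQ | hQP
  · exact ((hc P hP).2.2 a b (hab P hP)).elim haP fun hb => hbQ (hPQ hb)
  · exact ((hc Q hQ).2.2 a b (hab Q hQ)).elim (fun ha => haP (hQP ha)) hbQ

theorem exists_isMinPrime_subset {P : Set α} (hP : IsPrimeFilter P) :
    ∃ m, IsMinPrime m ∧ m ⊆ P := by
  obtain ⟨m, hmP, hm⟩ := zorn_superset_nonempty {Q | IsPrimeFilter Q}
    (fun c hc hchain hne => ⟨⋂₀ c, isPrimeFilter_sInter_of_isChain hc hchain hne,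
      fun _ => Set.sInter_subset_of_mem⟩) P hP
  exact ⟨m, ⟨hm.prop, fun Q hQ hQm => hm.eq_of_subset hQ hQm⟩, hmP⟩

theorem IsPrimeFilter.exists_sup_eq_top {P : Set α} (hP : IsPrimeFilter P) {x : α}
    (hx : ∀ Q, IsPrimeFilter Q → Q ⊆ P → x ∈ Q) : ∃ d ∉ P, x ⊔ d = ⊤ := by
  by_contra! h
  obtain ⟨d₀, hd₀⟩ : ∃ d, d ∉ P := by simpa [Set.eq_univ_iff_forall] using hP.2.1
  let D := {a | ∃ d ∉ P, a ≤ x ⊔ d}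
  have hD : IsJoinClosed D := by
    refine ⟨⟨x, d₀, hd₀, le_sup_left⟩, ?_⟩
    rintro a ⟨d, hd, ha⟩ b ⟨d', hd', hb⟩
    refine ⟨d ⊔ d', fun hdd' => (hP.2.2 d d' hdd').elim hd hd', ?_⟩
    exact (sup_le_sup ha hb).trans_eq (by rw [sup_sup_sup_comm, sup_idem])
  obtain ⟨Q, hQ, -, hQD⟩ := exists_isPrimeFilter_of_disjoint isFilter_singleton_top hD
    (Set.disjoint_singleton_left.2 fun ⟨d, hd, htop⟩ => h d hd (top_unique htop))
  have hQP : Q ⊆ P := fun q hq => by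
    by_contra hqP
    exact Set.disjoint_left.1 hQD hq ⟨q, hqP, le_sup_right⟩
  exact Set.disjoint_left.1 hQD (hx Q hQ hQP) ⟨d₀, hd₀, le_sup_left⟩

theorem IsMinPrime.exists_sup_eq_top {m : Set α} (hm : IsMinPrime m) {x : α} (hx : x ∈ m) :
    ∃ y ∉ m, x ⊔ y = ⊤ :=
  hm.1.exists_sup_eq_top fun Q hQ hQm => hm.2 Q hQ hQm ▸ hx

/-- The elementwise form of normality. -/
def HasNormalSplitting (α : Type*) [ResiduatedLattice α] : Prop :=
  ∀ x y : α, x ⊔ y = ⊤ → ∃ a b : α, x ⊔ a = ⊤ ∧ y ⊔ b = ⊤ ∧ a * b = ⊥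

namespace HasNormalSplitting

theorem of_filterGen_eq_univ
    (h : ∀ x y : α, x ⊔ y = ⊤ → filterGen (coannulet x ∪ coannulet y) = Set.univ) :
    HasNormalSplitting α := by
  intro x y hxy
  obtain ⟨a, ha, b, hb, hab⟩ := (mem_filterGen_union (isFilter_coannulet x)
    (isFilter_coannulet y)).1 ((h x y hxy).symm ▸ Set.mem_univ ⊥)
  exact ⟨a, b, ha, hb, le_bot_iff.1 hab⟩

theorem minPrime_subset (hN : HasNormalSplitting α) {P m m' : Set α} (hP : IsPrimeFilter P)
    (hm : IsMinPrime m) (hm' : IsMinPrime m') (hmP : m ⊆ P) (hm'P : m' ⊆ P) : m ⊆ m' := by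
  intro x hx
  by_contra hxm'
  obtain ⟨y, hym, hxy⟩ := hm.exists_sup_eq_top hx
  obtain ⟨a, b, hxa, hyb, hab⟩ := hN x y hxy
  have ha : a ∈ m' := (hm'.1.2.2 x a (hxa ▸ hm'.1.1.top_mem)).resolve_left hxm'
  have hb : b ∈ m := (hm.1.2.2 y b (hyb ▸ hm.1.1.top_mem)).resolve_left hym
  exact hP.2.1 (hP.1.eq_univ_of_bot_mem (hab ▸ hP.1.mul_mem (hm'P ha) (hmP hb)))

theorem isNormalRL (hN : HasNormalSplitting α) : IsNormalRL α := by
  intro P hP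
  obtain ⟨m, hm, hmP⟩ := exists_isMinPrime_subset hP
  exact ⟨m, ⟨hm, hmP⟩, fun m' ⟨hm', hm'P⟩ =>
    (hN.minPrime_subset hP hm' hm hm'P hmP).antisymm (hN.minPrime_subset hP hm hm' hmP hm'P)⟩

theorem coannulet_sup_subset (hN : HasNormalSplitting α) {F : Set α} (hF : IsFilter F)
    {x y : α} (hx : coannulet x ⊆ F) (hy : coannulet y ⊆ F) : coannulet (x ⊔ y) ⊆ F := by
  intro a ha
  obtain ⟨c, d, hc, hd, hcd⟩ := hN (x ⊔ a) (y ⊔ a) (by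
    rw [sup_sup_sup_comm, sup_idem]; exact ha)
  have hac : a ⊔ c ∈ F := hx ((sup_assoc x a c).symm.trans hc)
  have had : a ⊔ d ∈ F := hy ((sup_assoc y a d).symm.trans hd)
  exact hF.mem_of_le (hF.mul_mem hac had) (by simpa [hcd] using sup_mul_sup_le a c d)

theorem filterGen_coannulet_union (hN : HasNormalSplitting α) (x y : α) :
    filterGen (coannulet x ∪ coannulet y) = coannulet (x ⊔ y) := by
  have hgen := isFilter_filterGen (coannulet x ∪ coannulet y)
  refine (filterGen_subset (isFilter_coannulet _) ?_).antisymm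
    (hN.coannulet_sup_subset hgen (fun a ha => subset_filterGen _ (.inl ha))
      (fun a ha => subset_filterGen _ (.inr ha)))
  exact Set.union_subset (coannulet_mono le_sup_left) (coannulet_mono le_sup_right)

theorem isOmegaF_filterGen_sUnion (hN : HasNormalSplitting α) {𝔉 : Set (Set α)}
    (h𝔉 : ∀ H ∈ 𝔉, IsOmegaF H) : IsOmegaF (filterGen (⋃₀ 𝔉)) := by
  set F := filterGen (⋃₀ 𝔉)
  have hF : IsFilter F := isFilter_filterGen _
  have hK : IsLatticeIdeal {k | coannulet k ⊆ F} :=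
    ⟨⟨⊥, fun a ha => (bot_sup_eq a ▸ ha : a = ⊤) ▸ hF.top_mem⟩,
      fun _ hx _ hy => hN.coannulet_sup_subset hF hx hy,
      fun _ _ hxy hy => (coannulet_mono hxy).trans hy⟩
  refine ⟨hF, _, hK, (filterGen_subset (isFilter_omegaU hK.isJoinClosed) ?_).antisymm ?_⟩
  · rintro a ⟨H, hH, haH⟩
    obtain ⟨-, I, -, rfl⟩ := h𝔉 H hH
    obtain ⟨i, hi, hia⟩ := haH
    exact ⟨i, fun b hb => subset_filterGen _ ⟨_, hH, i, hi, hb⟩, hia⟩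
  · rintro a ⟨k, hk, hka⟩
    exact hk hka

end HasNormalSplitting

theorem IsNormalRL.hasNormalSplitting (hA : IsNormalRL α) : HasNormalSplitting α := by
  refine .of_filterGen_eq_univ fun x y hxy => ?_
  by_contra hne
  obtain ⟨P, hP, hGP⟩ := exists_isPrimeFilter_superset (isFilter_filterGen _) hne
  obtain ⟨m, ⟨hm, hmP⟩, huniq⟩ := hA P hP
  have hcoann : ∀ z, coannulet z ⊆ P → z ∉ m := fun z hzP hzm => by
    obtain ⟨d, hd, hzd⟩ := hP.exists_sup_eq_top (x := z) fun Q hQ hQP => by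
      obtain ⟨m', hm', hm'Q⟩ := exists_isMinPrime_subset hQ
      exact hm'Q (huniq m' ⟨hm', hm'Q.trans hQP⟩ ▸ hzm)
    exact hd (hzP hzd)
  rcases hm.1.2.2 x y (hxy ▸ hm.1.1.top_mem) with hx | hy
  · exact hcoann x (fun a ha => hGP (subset_filterGen _ (.inl ha))) hx
  · exact hcoann y (fun a ha => hGP (subset_filterGen _ (.inr ha))) hy

/-- Proposition 4.7: the five characterizations of normality in terms of
`ω`-filters and coannulets are equivalent. -/
theorem stmt_19 (α : Type*) [ResiduatedLattice α] :
    List.TFAE [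
      (∀ G H I J : Set α, IsFilter G → IsFilter H →
        IsLatticeIdeal I → IsLatticeIdeal J → G = omegaU I → H = omegaU J →
        omegaU (idealGen (I ∪ J)) = Set.univ → filterGen (G ∪ H) = Set.univ),
      IsNormalRL α,
      (∀ 𝔉 : Set (Set α), (∀ H ∈ 𝔉, IsOmegaF H) → IsOmegaF (filterGen (⋃₀ 𝔉))),
      (∀ G H : Set α, IsOmegaF G → IsOmegaF H → IsOmegaF (filterGen (G ∪ H))),
      (∀ x y : α, ∃ z : α, filterGen (coannulet x ∪ coannulet y) = coannulet z) ] := by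
  tfae_have 1 → 2 := by
    refine fun h1 => HasNormalSplitting.isNormalRL (.of_filterGen_eq_univ fun x y hxy => ?_)
    have hK : omegaU (idealGen (Set.Iic x ∪ Set.Iic y)) = Set.univ :=
      omegaU_eq_univ_iff.2 (hxy ▸ sup_mem_idealGen (.inl le_rfl) (.inr le_rfl))
    exact h1 _ _ _ _ (isFilter_coannulet x) (isFilter_coannulet y) (isLatticeIdeal_Iic x)
      (isLatticeIdeal_Iic y) (coannulet_eq_omegaU_Iic x) (coannulet_eq_omegaU_Iic y) hK
  tfae_have 2 → 3 := fun h2 _ => h2.hasNormalSplitting.isOmegaF_filterGen_sUnion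
  tfae_have 3 → 4 := fun h3 G H hG hH => Set.sUnion_pair G H ▸ h3 {G, H} (by
    rintro K (rfl | rfl) <;> assumption)
  tfae_have 4 → 1 := by
    rintro h4 G H I J - - hI hJ rfl rfl hIJ
    obtain ⟨i, hi, j, hj, hij⟩ := mem_idealGen_union hI hJ (omegaU_eq_univ_iff.1 hIJ)
    refine (h4 _ _ (isOmegaF_omegaU hI) (isOmegaF_omegaU hJ)).eq_univ_of_coannulet_subset
      (subset_filterGen _ (.inl ⟨i, hi, top_le_iff.1 hij⟩)) fun a ha => ?_
    exact subset_filterGen _ (.inr ⟨j, hj, ha⟩)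
  tfae_have 2 → 5 := fun h2 x y => ⟨x ⊔ y, h2.hasNormalSplitting.filterGen_coannulet_union x y⟩
  tfae_have 5 → 2 := by
    refine fun h5 => HasNormalSplitting.isNormalRL (.of_filterGen_eq_univ fun x y hxy => ?_)
    obtain ⟨z, hz⟩ := h5 x y
    refine hz ▸ (isOmegaF_coannulet z).eq_univ_of_coannulet_subset (x := x) ?_ ?_
    · exact hz ▸ subset_filterGen _ (.inr ((sup_comm y x).trans hxy))
    · exact fun a ha => hz ▸ subset_filterGen _ (.inl ha)
  tfae_finish
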